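/- Containment of segments in level intervals: if i < w < m^ℓ and j is the largest base-m digit position in which i and w differ, then both i and x(i,w) − 1 lie in the same level-j interval I_{j,r} (i.e., ⌊i/m^{j+1}⌋ = ⌊(x(i,w)−1)/m^{j+1}⌋), and moreover x(i,w) is a multiple of m^{j'} for every j' ≤ j. -/

import Mathlib

/-- The `j`-th base-`m` digit of `i`. -/
def digit (m j i : ℕ) : ℕ := (i / m ^ j) % m

/-- The largest base-`m` digit position (below `ℓ`) in which `i` and `w` differ. -/
def topDiff (m ℓ i w : ℕ) : ℕ :=
  Nat.findGreatest (fun j => digit m j i ≠ digit m j w) ℓ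

/-- The intermediate destination `x(i, w) = ⌊w / m^{j(i,w)}⌋ · m^{j(i,w)}`. -/
def interDest (m ℓ i w : ℕ) : ℕ :=
  (w / m ^ topDiff m ℓ i w) * m ^ topDiff m ℓ i w

/-!
Above position `j = j(i, w)` the digits of `i` and `w` agree, so `i` and `w` lie in the same
level-`j` interval; at position `j` the digit of `w` is the larger one, so `i < x(i, w) ≤ w`.
Hence `i ≤ x(i, w) - 1 ≤ w`, and `x(i, w) - 1` is squeezed into the interval of `i` and `w`.
-/

lemma div_pow_eq_mul_add_digit (m s a : ℕ) : a / m ^ s = m * (a / m ^ (s + 1)) + digit m s a := by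
  rw [digit, pow_succ, ← Nat.div_div_eq_div_mul, Nat.div_add_mod]

section Digits

variable {m ℓ a b : ℕ}

lemma digit_eq_zero_of_lt_pow {n t : ℕ} (hm : 0 < m) (ha : a < m ^ n) (ht : n ≤ t) :
    digit m t a = 0 := by
  rw [digit, Nat.div_eq_of_lt (ha.trans_le (pow_le_pow_right₀ hm ht)), Nat.zero_mod]

lemma div_pow_eq_of_digit_eq {n s : ℕ} (hm : 0 < m) (ha : a < m ^ n) (hb : b < m ^ n)
    (h : ∀ t, s ≤ t → digit m t a = digit m t b) : a / m ^ s = b / m ^ s := by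
  obtain ⟨k, hk⟩ : ∃ k, n ≤ s + k := ⟨n, by omega⟩
  induction k generalizing s with
  | zero =>
    have hn : m ^ n ≤ m ^ s := pow_le_pow_right₀ hm hk
    rw [Nat.div_eq_of_lt (ha.trans_le hn), Nat.div_eq_of_lt (hb.trans_le hn)]
  | succ k ih =>
    have hhigh := ih (fun t ht => h t (by omega)) (by omega : n ≤ s + 1 + k)
    rw [div_pow_eq_mul_add_digit m s a, div_pow_eq_mul_add_digit m s b, hhigh, h s le_rfl]

lemma digit_eq_of_topDiff_lt {t : ℕ} (hm : 0 < m) (ha : a < m ^ ℓ) (hb : b < m ^ ℓ)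
    (ht : topDiff m ℓ a b < t) : digit m t a = digit m t b := by
  rcases le_or_gt t ℓ with htℓ | hℓt
  · exact not_not.1 (Nat.findGreatest_is_greatest ht htℓ)
  · rw [digit_eq_zero_of_lt_pow hm ha hℓt.le, digit_eq_zero_of_lt_pow hm hb hℓt.le]

lemma digit_topDiff_ne (hm : 0 < m) (ha : a < m ^ ℓ) (hb : b < m ^ ℓ) (hab : a ≠ b) :
    digit m (topDiff m ℓ a b) a ≠ digit m (topDiff m ℓ a b) b := by
  intro hdig
  have hagree : ∀ t, topDiff m ℓ a b ≤ t → digit m t a = digit m t b := fun t ht =>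
    ht.eq_or_lt.elim (· ▸ hdig) (digit_eq_of_topDiff_lt hm ha hb)
  have hzero : topDiff m ℓ a b = 0 := by
    by_contra hne
    exact Nat.findGreatest_of_ne_zero rfl hne hdig
  rw [hzero] at hagree
  exact hab (by simpa using div_pow_eq_of_digit_eq hm ha hb hagree)

lemma div_pow_topDiff_succ_eq (hm : 0 < m) (ha : a < m ^ ℓ) (hb : b < m ^ ℓ) :
    a / m ^ (topDiff m ℓ a b + 1) = b / m ^ (topDiff m ℓ a b + 1) :=
  div_pow_eq_of_digit_eq hm ha hb fun _ ht => digit_eq_of_topDiff_lt hm ha hb ht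

lemma div_pow_topDiff_lt (hm : 0 < m) (hb : b < m ^ ℓ) (hab : a < b) :
    a / m ^ topDiff m ℓ a b < b / m ^ topDiff m ℓ a b := by
  refine (Nat.div_le_div_right hab.le).lt_of_ne fun hdiv => ?_
  exact digit_topDiff_ne hm (hab.trans hb) hb hab.ne (congrArg (· % m) hdiv)

lemma lt_interDest (hm : 0 < m) (hb : b < m ^ ℓ) (hab : a < b) : a < interDest m ℓ a b :=
  (Nat.div_lt_iff_lt_mul (pow_pos hm _)).1 (div_pow_topDiff_lt hm hb hab)

end Digits

theorem segment_in_level_interval_general (m ℓ i w : ℕ) (hm : 2 ≤ m)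
    (hiw : i < w) (hw : w < m ^ ℓ) :
    i / m ^ (topDiff m ℓ i w + 1) = (interDest m ℓ i w - 1) / m ^ (topDiff m ℓ i w + 1) ∧
      ∀ j', j' ≤ topDiff m ℓ i w → m ^ j' ∣ interDest m ℓ i w := by
  have hm₀ : 0 < m := by omega
  have hi_lt_x := lt_interDest hm₀ hw hiw
  have hx_le_w : interDest m ℓ i w ≤ w := Nat.div_mul_le_self w _
  refine ⟨le_antisymm ?_ ?_, fun j' hj' => Dvd.dvd.mul_left (pow_dvd_pow m hj') _⟩
  · exact Nat.div_le_div_right (by omega)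
  · calc (interDest m ℓ i w - 1) / m ^ (topDiff m ℓ i w + 1)
        ≤ w / m ^ (topDiff m ℓ i w + 1) := Nat.div_le_div_right (by omega)
      _ = i / m ^ (topDiff m ℓ i w + 1) := (div_pow_topDiff_succ_eq hm₀ (hiw.trans hw) hw).symm

theorem segment_in_level_interval (m ℓ i w : ℕ) (hm : 2 ≤ m) (hℓ : 1 ≤ ℓ)
    (hiw : i < w) (hw : w < m ^ ℓ) :
    i / m ^ (topDiff m ℓ i w + 1) = (interDest m ℓ i w - 1) / m ^ (topDiff m ℓ i w + 1) ∧
      ∀ j', j' ≤ topDiff m ℓ i w → m ^ j' ∣ interDest m ℓ i w :=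
  segment_in_level_interval_general m ℓ i w hm hiw hw
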